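/- For any polynomial f ∈ ℂ[x] of degree n ≥ 1, the Mahler measure satisfies M(f) ≤ ‖f‖_2, where ‖f‖_2 is the Euclidean norm of the coefficient vector. -/

import Mathlib

open Polynomial Finset

/-! Both sides are read off Mathlib's Mahler measure: it is multiplicative, with
`M(C a) = ‖a‖` and `M(X - C z) = max 1 ‖z‖`, and Jensen's inequality combined with Parseval's
identity on the unit circle gives `M(f) ≤ ‖f‖₂` (`mahlerMeasure_le_sqrt_sum_sq_norm_coeff`). -/

theorem mahlerMeasure_C_mul_prod_X_sub_C {ι : Type*} (s : Finset ι) (a : ℂ) (z : ι → ℂ) :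
    (C a * ∏ i ∈ s, (X - C (z i))).mahlerMeasure = ‖a‖ * ∏ i ∈ s, max 1 ‖z i‖ := by
  rw [mahlerMeasure_mul, mahlerMeasure_const, prod_eq_multiset_prod,
    prod_mahlerMeasure_eq_mahlerMeasure_prod, Multiset.map_map, prod_eq_multiset_prod]
  simp only [Function.comp_def, mahlerMeasure_X_sub_C]

theorem natDegree_C_mul_prod_X_sub_C_le {ι : Type*} (s : Finset ι) (a : ℂ) (z : ι → ℂ) :
    (C a * ∏ i ∈ s, (X - C (z i))).natDegree ≤ #s :=
  (natDegree_C_mul_le _ _).trans <| (natDegree_prod_le _ _).trans <| by simp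

theorem mahler_le_l2norm_general (n : ℕ) (f : Polynomial ℂ) (a : ℂ)
    (z : Fin n → ℂ) (hf : f = C a * ∏ i, (X - C (z i))) :
    ‖a‖ * ∏ i, max 1 ‖z i‖ ≤
      Real.sqrt (∑ k ∈ Finset.range (n + 1), ‖f.coeff k‖ ^ 2) := by
  have hdeg : f.natDegree < n + 1 := by
    simpa [hf] using Nat.lt_succ_of_le (natDegree_C_mul_prod_X_sub_C_le univ a z)
  calc ‖a‖ * ∏ i, max 1 ‖z i‖ = f.mahlerMeasure := by
        rw [hf, mahlerMeasure_C_mul_prod_X_sub_C]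
    _ ≤ √(f.sum fun _ c => ‖c‖ ^ 2) := mahlerMeasure_le_sqrt_sum_sq_norm_coeff f
    _ = _ := by rw [sum_over_range' f (by simp) (n + 1) hdeg]

/-- Landau's inequality: the Mahler measure of a polynomial is at most the Euclidean norm
of its coefficient vector, `M(f) ≤ ‖f‖₂`. -/
theorem mahler_le_l2norm (n : ℕ) (hn : 1 ≤ n) (f : Polynomial ℂ) (a : ℂ) (ha : a ≠ 0)
    (z : Fin n → ℂ) (hf : f = C a * ∏ i, (X - C (z i))) :
    ‖a‖ * ∏ i, max 1 ‖z i‖ ≤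
      Real.sqrt (∑ k ∈ Finset.range (n + 1), ‖f.coeff k‖ ^ 2) :=
  mahler_le_l2norm_general n f a z hf
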